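/- arXiv:1603.00521 — 4 statements merged into one kernel-verified Lean document; each statement's English description precedes it below -/
import Mathlib

section
/- For all integers k ≥ 3, n ≥ 3, and real C > 0, if p = C·n^{-2/(k+1)} ≤ 1/2, then the probability that the binomial random graph G(n,p) contains no clique on k+1 vertices is greater than exp(-C^{binom(k+1,2)}·n). -/
open Finset

open Classical in
/-- Probability of the event `A` for the binomial random graph `G(n,p)`,
modeled as a random subset of the edge set of the complete graph on `Fin n`. -/
noncomputable def gnpProb (n : ℕ) (p : ℝ) (A : Finset (Sym2 (Fin n)) → Prop) : ℝ :=
  ∑ S ∈ ((⊤ : SimpleGraph (Fin n)).edgeFinset).powerset,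
    if A S then
      p ^ S.card * (1 - p) ^ (((⊤ : SimpleGraph (Fin n)).edgeFinset).card - S.card)
    else 0

/-!
Harris's inequality (the FKG inequality for the product measure on the subsets of the edge set)
says that decreasing events are positively correlated. "No `K_{k+1}`" is the intersection of the
decreasing events "`T` does not span a clique", one for each `(k+1)`-set `T`, each of probability
`1 - x` with `x = p ^ binom(k+1,2) = C ^ binom(k+1,2) n⁻ᵏ ≤ 1/2`. Hence the probability is at least
`(1 - x) ^ binom(n,k+1) ≥ exp (-2 x binom(n,k+1))`, and `2 binom(n,k+1) < n ^ (k+1)`.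
-/

section Harris

variable {α : Type*} [DistribLattice α] [Fintype α] {μ : α → ℝ}

theorem fkg_of_antitone {f g : α → ℝ} (hμ₀ : 0 ≤ μ) (hf₀ : 0 ≤ f) (hg₀ : 0 ≤ g)
    (hf : Antitone f) (hg : Antitone g) (hμ : ∀ a b, μ a * μ b ≤ μ (a ⊓ b) * μ (a ⊔ b)) :
    (∑ a, μ a * f a) * ∑ a, μ a * g a ≤ (∑ a, μ a) * ∑ a, μ a * (f a * g a) :=
  fkg (α := αᵒᵈ) f g μ hμ₀ hf₀ hg₀ hf.dual_left hg.dual_left fun a b =>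
    (hμ (OrderDual.ofDual a) (OrderDual.ofDual b)).trans_eq (mul_comm _ _)

theorem prod_sum_mul_le_sum_mul_prod_of_antitone {ι : Type*} {g : ι → α → ℝ} (hμ₀ : 0 ≤ μ)
    (hμ₁ : ∑ a, μ a = 1) (hμ : ∀ a b, μ a * μ b ≤ μ (a ⊓ b) * μ (a ⊔ b))
    (hg₀ : ∀ i, 0 ≤ g i) (hg : ∀ i, Antitone (g i)) (s : Finset ι) :
    ∏ i ∈ s, ∑ a, μ a * g i a ≤ ∑ a, μ a * ∏ i ∈ s, g i a := by
  induction s using Finset.cons_induction with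
  | empty => simp [hμ₁]
  | cons i s hi ih =>
    have hprod₀ : 0 ≤ fun a => ∏ j ∈ s, g j a := fun a => prod_nonneg fun j _ => hg₀ j a
    have hprod : Antitone fun a => ∏ j ∈ s, g j a := fun a b hab =>
      prod_le_prod (fun j _ => hg₀ j b) fun j _ => hg j hab
    calc ∏ j ∈ cons i s hi, ∑ a, μ a * g j a
        = (∑ a, μ a * g i a) * ∏ j ∈ s, ∑ a, μ a * g j a := prod_cons hi
      _ ≤ (∑ a, μ a * g i a) * ∑ a, μ a * ∏ j ∈ s, g j a :=
        mul_le_mul_of_nonneg_left ih (sum_nonneg fun a _ => mul_nonneg (hμ₀ a) (hg₀ i a))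
      _ ≤ ∑ a, μ a * (g i a * ∏ j ∈ s, g j a) := by
        simpa [hμ₁] using fkg_of_antitone hμ₀ (hg₀ i) hprod₀ (hg i) hprod hμ
      _ = ∑ a, μ a * ∏ j ∈ cons i s hi, g j a := by simp_rw [prod_cons]

end Harris

section BiasedWeight

variable {β : Type*} [DecidableEq β] (E : Finset β) (p : ℝ)

/-- The `p`-biased product measure on the subsets of `E`, extended by zero to all finsets so that
it lives on the finite distributive lattice `Finset β`. -/
def biasedWeight (S : Finset β) : ℝ :=
  if S ⊆ E then p ^ #S * (1 - p) ^ (#E - #S) else 0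

variable {E p}

theorem biasedWeight_nonneg (hp₀ : 0 ≤ p) (hp₁ : p ≤ 1) (S : Finset β) :
    0 ≤ biasedWeight E p S := by
  unfold biasedWeight
  split_ifs
  · exact mul_nonneg (pow_nonneg hp₀ _) (pow_nonneg (sub_nonneg.2 hp₁) _)
  · exact le_rfl

theorem biasedWeight_mul_le (hp₀ : 0 ≤ p) (hp₁ : p ≤ 1) (a b : Finset β) :
    biasedWeight E p a * biasedWeight E p b ≤
      biasedWeight E p (a ⊓ b) * biasedWeight E p (a ⊔ b) := by
  have hRHS := mul_nonneg (biasedWeight_nonneg (E := E) hp₀ hp₁ (a ⊓ b))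
    (biasedWeight_nonneg (E := E) hp₀ hp₁ (a ⊔ b))
  by_cases ha : a ⊆ E
  · by_cases hb : b ⊆ E
    · have hab : a ∩ b ⊆ E := inter_subset_left.trans ha
      have hab' : a ∪ b ⊆ E := union_subset ha hb
      have hcard := card_inter_add_card_union a b
      have := card_le_card ha
      have := card_le_card hb
      have := card_le_card hab
      have := card_le_card hab'
      refine le_of_eq ?_
      simp only [biasedWeight, inf_eq_inter, sup_eq_union, if_pos ha, if_pos hb, if_pos hab,
        if_pos hab']
      calc p ^ #a * (1 - p) ^ (#E - #a) * (p ^ #b * (1 - p) ^ (#E - #b))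
          = p ^ (#a + #b) * (1 - p) ^ ((#E - #a) + (#E - #b)) := by ring
        _ = p ^ (#(a ∩ b) + #(a ∪ b)) * (1 - p) ^ ((#E - #(a ∩ b)) + (#E - #(a ∪ b))) := by
          rw [← hcard, show #E - #a + (#E - #b) = #E - #(a ∩ b) + (#E - #(a ∪ b)) by omega]
        _ = _ := by ring
    · simpa [biasedWeight, hb] using hRHS
  · simpa [biasedWeight, ha] using hRHS

variable [Fintype β]

theorem sum_biasedWeight_mul (f : Finset β → ℝ) :
    ∑ S, biasedWeight E p S * f S = ∑ S ∈ E.powerset, p ^ #S * (1 - p) ^ (#E - #S) * f S := by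
  rw [← filter_subset_univ, sum_filter]
  refine sum_congr rfl fun S _ => ?_
  unfold biasedWeight
  split_ifs <;> simp

theorem sum_biasedWeight : ∑ S, biasedWeight E p S = 1 := by
  simpa [sum_pow_mul_eq_add_pow] using sum_biasedWeight_mul (E := E) (p := p) 1

theorem sum_biasedWeight_mul_boole_subset {D : Finset β} (hD : D ⊆ E) :
    ∑ S, biasedWeight E p S * (if D ⊆ S then 1 else 0) = p ^ #D := by
  have hIcc : {S ∈ E.powerset | D ⊆ S} = (E \ D).powerset.image (D ∪ ·) := by
    rw [← Icc_eq_image_powerset hD]; ext S; simp [and_comm]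
  have hdisj : ∀ U ∈ (E \ D).powerset, Disjoint D U := fun U hU =>
    disjoint_of_subset_right (mem_powerset.1 hU) disjoint_sdiff
  have hinj : Set.InjOn (D ∪ ·) ((E \ D).powerset : Set (Finset β)) := fun U hU U' hU' h => by
    rw [← union_sdiff_cancel_left (hdisj U hU), ← union_sdiff_cancel_left (hdisj U' hU')]
    exact congrArg (· \ D) h
  rw [sum_biasedWeight_mul]
  simp only [mul_boole]
  rw [← sum_filter, hIcc, sum_image hinj]
  calc ∑ U ∈ (E \ D).powerset, p ^ #(D ∪ U) * (1 - p) ^ (#E - #(D ∪ U))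
      = ∑ U ∈ (E \ D).powerset, p ^ #D * (p ^ #U * (1 - p) ^ (#(E \ D) - #U)) := by
        refine sum_congr rfl fun U hU => ?_
        rw [card_union_of_disjoint (hdisj U hU), card_sdiff_of_subset hD, pow_add, mul_assoc,
          Nat.sub_add_eq]
    _ = p ^ #D := by rw [← mul_sum, sum_pow_mul_eq_add_pow]; simp

theorem sum_biasedWeight_mul_boole_not_subset {D : Finset β} (hD : D ⊆ E) :
    ∑ S, biasedWeight E p S * (if ¬D ⊆ S then 1 else 0) = 1 - p ^ #D := by
  rw [eq_sub_iff_add_eq, ← sum_biasedWeight_mul_boole_subset hD, ← sum_add_distrib]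
  refine (sum_congr rfl fun S _ => ?_).trans (sum_biasedWeight (E := E) (p := p))
  split_ifs <;> simp

theorem prod_one_sub_pow_le_sum_biasedWeight_mul_boole {ι : Type*} (hp₀ : 0 ≤ p) (hp₁ : p ≤ 1)
    (s : Finset ι) {D : ι → Finset β} (hD : ∀ i ∈ s, D i ⊆ E) :
    ∏ i ∈ s, (1 - p ^ #(D i)) ≤
      ∑ S, biasedWeight E p S * if ∀ i ∈ s, ¬D i ⊆ S then 1 else 0 := by
  have hantitone : ∀ i, Antitone fun S => if ¬D i ⊆ S then (1 : ℝ) else 0 := by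
    intro i S S' hSS'
    dsimp only
    by_cases h : D i ⊆ S
    · simp [h, h.trans hSS']
    · split_ifs <;> norm_num
  calc ∏ i ∈ s, (1 - p ^ #(D i))
      = ∏ i ∈ s, ∑ S, biasedWeight E p S * if ¬D i ⊆ S then 1 else 0 :=
        (prod_congr rfl fun i hi => sum_biasedWeight_mul_boole_not_subset (hD i hi)).symm
    _ ≤ ∑ S, biasedWeight E p S * ∏ i ∈ s, if ¬D i ⊆ S then 1 else 0 :=
        prod_sum_mul_le_sum_mul_prod_of_antitone (μ := biasedWeight E p)
          (g := fun i S => if ¬D i ⊆ S then 1 else 0) (biasedWeight_nonneg hp₀ hp₁) sum_biasedWeight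
          (biasedWeight_mul_le hp₀ hp₁) (fun i S => by dsimp only; split_ifs <;> norm_num)
          hantitone s
    _ = _ := by simp_rw [prod_boole]

end BiasedWeight

section Clique

variable {V : Type*} [DecidableEq V]

theorem isClique_fromEdgeSet_iff {S : Set (Sym2 V)} {T : Finset V} :
    (SimpleGraph.fromEdgeSet S).IsClique (T : Set V) ↔
      ↑(T.offDiag.image Sym2.mk.uncurry) ⊆ S := by
  simp only [SimpleGraph.IsClique, Set.Pairwise, SimpleGraph.fromEdgeSet_adj, coe_image,
    coe_offDiag, Set.image_subset_iff]
  constructor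
  · rintro h ⟨a, b⟩ ⟨ha, hb, hab⟩
    exact (h ha hb hab).1
  · intro h a ha b hb hab
    exact ⟨@h (a, b) ⟨ha, hb, hab⟩, hab⟩

theorem cliqueFree_fromEdgeSet_iff [Fintype V] {S : Set (Sym2 V)} {r : ℕ} :
    (SimpleGraph.fromEdgeSet S).CliqueFree r ↔
      ∀ T ∈ powersetCard r (univ : Finset V), ¬↑(T.offDiag.image Sym2.mk.uncurry) ⊆ S := by
  simp [SimpleGraph.CliqueFree, SimpleGraph.isNClique_iff, isClique_fromEdgeSet_iff, imp_not_comm]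

theorem image_offDiag_subset_edgeFinset_top [Fintype V] (T : Finset V) :
    T.offDiag.image Sym2.mk.uncurry ⊆ (⊤ : SimpleGraph V).edgeFinset := by
  intro e he
  obtain ⟨⟨a, b⟩, hab, rfl⟩ := mem_image.1 he
  simpa using (mem_offDiag.1 hab).2.2

end Clique

open Classical in
theorem gnpProb_eq_sum_biasedWeight (n : ℕ) (p : ℝ) (A : Finset (Sym2 (Fin n)) → Prop) :
    gnpProb n p A =
      ∑ S, biasedWeight (⊤ : SimpleGraph (Fin n)).edgeFinset p S * if A S then 1 else 0 := by
  rw [gnpProb, sum_biasedWeight_mul]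
  refine sum_congr rfl fun S _ => ?_
  split_ifs <;> simp

theorem one_sub_pow_choose_le_gnpProb_cliqueFree {p : ℝ} (hp₀ : 0 ≤ p) (hp₁ : p ≤ 1) (n r : ℕ) :
    (1 - p ^ r.choose 2) ^ n.choose r ≤
      gnpProb n p fun S => (SimpleGraph.fromEdgeSet (S : Set (Sym2 (Fin n)))).CliqueFree r := by
  have hcount : (1 - p ^ r.choose 2) ^ n.choose r =
      ∏ T ∈ powersetCard r (univ : Finset (Fin n)),
        (1 - p ^ #(T.offDiag.image Sym2.mk.uncurry)) := by
    rw [prod_congr rfl fun T hT => by rw [Sym2.card_image_offDiag, mem_powersetCard_univ.1 hT],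
      prod_const, card_powersetCard, card_univ, Fintype.card_fin]
  rw [hcount, gnpProb_eq_sum_biasedWeight]
  refine (prod_one_sub_pow_le_sum_biasedWeight_mul_boole hp₀ hp₁ _ fun T _ =>
    image_offDiag_subset_edgeFinset_top T).trans_eq ?_
  simp only [cliqueFree_fromEdgeSet_iff, coe_subset]
  congr!

theorem exp_neg_two_mul_le_one_sub {x : ℝ} (hx₀ : 0 ≤ x) (hx : x ≤ 1 / 2) :
    Real.exp (-(2 * x)) ≤ 1 - x := by
  have h₁ := Real.add_one_le_exp (2 * x)
  have h₂ : Real.exp (-(2 * x)) * Real.exp (2 * x) = 1 := by rw [← Real.exp_add]; simp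
  nlinarith [Real.exp_pos (-(2 * x))]

theorem rpow_neg_two_div_succ_pow_choose_two {x : ℝ} (hx : 0 < x) (k : ℕ) :
    (x ^ (-(2 : ℝ) / ((k : ℝ) + 1))) ^ (k + 1).choose 2 = (x ^ k)⁻¹ := by
  rw [← Real.rpow_natCast, ← Real.rpow_mul hx.le, Nat.cast_choose_two, ← Real.rpow_natCast,
    ← Real.rpow_neg hx.le]
  congr 1
  push_cast
  field_simp
  ring

theorem two_mul_choose_succ_lt_pow {n k : ℕ} (hn : 0 < n) (hk : 2 ≤ k) :
    2 * (n.choose (k + 1) : ℝ) < (n : ℝ) ^ (k + 1) := by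
  have hfact : (6 : ℝ) ≤ (k + 1).factorial := by
    exact_mod_cast Nat.factorial_le (by omega : 3 ≤ k + 1)
  have hpow : (0 : ℝ) < (n : ℝ) ^ (k + 1) := by positivity
  calc 2 * (n.choose (k + 1) : ℝ) ≤ 2 * ((n : ℝ) ^ (k + 1) / (k + 1).factorial) := by
        gcongr; exact Nat.choose_le_pow_div _ _
    _ ≤ 2 * ((n : ℝ) ^ (k + 1) / 6) := by gcongr
    _ < (n : ℝ) ^ (k + 1) := by linarith

/-- For all integers `k ≥ 3`, `n ≥ 3` and real `C > 0`, if `p = C·n^(-2/(k+1)) ≤ 1/2`, then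
the probability that `G(n,p)` contains no clique on `k+1` vertices exceeds
`exp(-C^(binom(k+1,2))·n)`. -/
theorem stmt0 (k n : ℕ) (hk : 3 ≤ k) (hn : 3 ≤ n) (C : ℝ) (hC : 0 < C) (p : ℝ)
    (hp : p = C * (n : ℝ) ^ (-(2 : ℝ) / ((k : ℝ) + 1))) (hp2 : p ≤ 1 / 2) :
    Real.exp (-(C ^ ((k + 1).choose 2) * (n : ℝ))) <
      gnpProb n p
        (fun S => (SimpleGraph.fromEdgeSet (S : Set (Sym2 (Fin n)))).CliqueFree (k + 1)) := by
  have hn₀ : (0 : ℝ) < n := by exact_mod_cast (by omega : 0 < n)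
  have hp₀ : 0 < p := hp ▸ mul_pos hC (Real.rpow_pos_of_pos hn₀ _)
  set B := (k + 1).choose 2
  set M := n.choose (k + 1)
  have hpB : p ^ B = C ^ B / (n : ℝ) ^ k := by
    rw [hp, mul_pow, rpow_neg_two_div_succ_pow_choose_two hn₀, div_eq_mul_inv]
  have hpB_le : p ^ B ≤ 1 / 2 :=
    (pow_le_of_le_one hp₀.le (by linarith) (Nat.choose_pos (by omega)).ne').trans hp2
  have hexponent : 2 * p ^ B * M < C ^ B * n := by
    calc 2 * p ^ B * M = C ^ B / (n : ℝ) ^ k * (2 * M) := by rw [hpB]; ring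
      _ < C ^ B / (n : ℝ) ^ k * (n : ℝ) ^ (k + 1) := by
        gcongr; exact two_mul_choose_succ_lt_pow (by omega) (by omega)
      _ = C ^ B * n := by field_simp; ring
  calc Real.exp (-(C ^ B * n)) < Real.exp (M * -(2 * p ^ B)) := Real.exp_lt_exp.2 (by linarith)
    _ = Real.exp (-(2 * p ^ B)) ^ M := Real.exp_nat_mul _ _
    _ ≤ (1 - p ^ B) ^ M :=
      pow_le_pow_left₀ (Real.exp_pos _).le (exp_neg_two_mul_le_one_sub (by positivity) hpB_le) M
    _ ≤ _ := one_sub_pow_choose_le_gnpProb_cliqueFree hp₀.le (by linarith) n (k + 1)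
end

section
/- Let k ≥ 3, r ≥ 2, n ≥ R(k;r), and set α = binom(R(k;r), k)^{-1}. For every coloring of the edges of K_n with r+1 colors, either the number of monochromatic copies of K_k whose color lies among the first r colors exceeds (α/2)·binom(n,k), or more than binom(n,2)/R(k;r)^2 edges receive color r+1. -/
open Finset

/-- `K_n → (K_k)_r`: every `r`-coloring of the edges of the complete graph on `Fin n`
contains a monochromatic copy of `K_k`. -/
def ArrowsClique (n k r : ℕ) : Prop :=
  ∀ c : Sym2 (Fin n) → Fin r, ∃ i : Fin r, ∃ t : Finset (Fin n),
    t.card = k ∧ ∀ x ∈ t, ∀ y ∈ t, x ≠ y → c s(x, y) = i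

/-- The `r`-color Ramsey number `R(k;r)` for `K_k`. -/
noncomputable def ramseyNumber (k r : ℕ) : ℕ := sInf {n | ArrowsClique n k r}

/-!
Every `R`-subset of the vertices, `R = R(k;r)`, either spans an edge of color `r+1` or, by the
Ramsey property, a monochromatic `K_k` in one of the first `r` colors. A fixed `K_k` lies in
`binom(n-k, R-k)` of the `R`-sets and a fixed edge in `binom(n-2, R-2)`. If both counts were
below the thresholds, the `K_k`'s would account for at most half of the `binom(n,R)` sets and
the edges for a fraction `binom(R,2)/R² < 1/2`, so some `R`-set would be left uncovered.
-/

section DoubleCounting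

variable {α ι : Type*} [DecidableEq α]

theorem card_filter_powersetCard_exists_subset_le (s : Finset α) (I : Finset ι)
    (f : ι → Finset α) {j R : ℕ} (hf : ∀ i ∈ I, f i ⊆ s ∧ #(f i) = j) (hjR : j ≤ R) :
    #{S ∈ s.powersetCard R | ∃ i ∈ I, f i ⊆ S} ≤ #I * (#s - j).choose (R - j) := by
  calc #{S ∈ s.powersetCard R | ∃ i ∈ I, f i ⊆ S}
      ≤ #(I.biUnion fun i => {S ∈ s.powersetCard R | f i ⊆ S}) :=
        card_le_card fun S hS => by
          obtain ⟨hSR, i, hi, hiS⟩ := mem_filter.mp hS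
          exact mem_biUnion.mpr ⟨i, hi, mem_filter.mpr ⟨hSR, hiS⟩⟩
    _ ≤ ∑ i ∈ I, #{S ∈ s.powersetCard R | f i ⊆ S} := card_biUnion_le
    _ = ∑ _i ∈ I, (#s - j).choose (R - j) := sum_congr rfl fun i hi => by
        obtain ⟨his, hij⟩ := hf i hi
        rw [card_filter_powersetCard_subset _ _ _ his (hij.trans_le hjR), hij]
    _ = #I * (#s - j).choose (R - j) := by rw [sum_const, smul_eq_mul]

end DoubleCounting

section Ramsey

/-- Pick a vertex of `V` and recurse into the largest color class of its edges to the rest. -/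
theorem exists_injective_seq_color_eq_of_lt {α : Type*} [DecidableEq α] {r : ℕ}
    (c : Sym2 α → Fin r) (m : ℕ) (V : Finset α) (hV : (r + 1) ^ m ≤ #V) :
    ∃ (v : Fin m → α) (f : Fin m → Fin r), Function.Injective v ∧ (∀ a, v a ∈ V) ∧
      ∀ a b, a < b → c s(v a, v b) = f a := by
  induction m generalizing V with
  | zero => exact ⟨Fin.elim0, Fin.elim0, fun a => a.elim0, fun a => a.elim0, fun a => a.elim0⟩
  | succ m ih =>
    obtain ⟨x, hx⟩ : V.Nonempty := card_pos.mp (lt_of_lt_of_le (by positivity) hV)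
    have hfiber : #(univ : Finset (Fin r)) * (r + 1) ^ m ≤ #(V.erase x) := by
      have : 1 ≤ (r + 1) ^ m := Nat.one_le_pow _ _ (by omega)
      rw [card_univ, Fintype.card_fin, card_erase_of_mem hx]
      rw [pow_succ, mul_add_one, mul_comm] at hV
      omega
    obtain ⟨i, -, hi⟩ := exists_le_card_fiber_of_mul_le_card_of_maps_to
      (f := fun y => c s(x, y)) (fun _ _ => mem_univ _) ⟨c s(x, x), mem_univ _⟩ hfiber
    obtain ⟨v, f, hinj, hvV, hvf⟩ := ih _ hi
    have hvx : ∀ a, v a ≠ x ∧ v a ∈ V ∧ c s(x, v a) = i := fun a => by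
      simpa only [mem_filter, mem_erase, and_assoc] using hvV a
    refine ⟨Fin.cons x v, Fin.cons i f,
      Fin.cons_injective_iff.mpr ⟨fun ⟨a, ha⟩ => (hvx a).1 ha, hinj⟩,
      Fin.cases hx fun a => (hvx a).2.1, ?_⟩
    intro a b hab
    induction b using Fin.cases with
    | zero => exact absurd hab (Fin.not_lt_zero a)
    | succ b =>
      induction a using Fin.cases with
      | zero => simpa using (hvx b).2.2
      | succ a => simpa using hvf a b (Fin.succ_lt_succ_iff.mp hab)

theorem arrowsClique_pow (k r : ℕ) : ArrowsClique ((r + 1) ^ (r * (k - 1) + 1)) k r := by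
  intro c
  obtain ⟨v, f, hinj, -, hvf⟩ := exists_injective_seq_color_eq_of_lt c (r * (k - 1) + 1) univ (by simp)
  obtain ⟨i, hi⟩ := Fintype.exists_lt_card_fiber_of_mul_lt_card f (n := k - 1) (by simp)
  obtain ⟨A, hA, hAk⟩ := exists_subset_card_eq (show k ≤ #{a | f a = i} by omega)
  have hfA : ∀ a ∈ A, f a = i := fun a ha => (mem_filter.mp (hA ha)).2
  refine ⟨i, A.map ⟨v, hinj⟩, by rw [card_map, hAk], ?_⟩
  simp only [mem_map, Function.Embedding.coeFn_mk]
  rintro _ ⟨a, ha, rfl⟩ _ ⟨b, hb, rfl⟩ hab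
  rcases lt_or_gt_of_ne (ne_of_apply_ne v hab) with h | h
  · rw [hvf a b h, hfA a ha]
  · rw [Sym2.eq_swap, hvf b a h, hfA b hb]

theorem arrowsClique_ramseyNumber (k r : ℕ) : ArrowsClique (ramseyNumber k r) k r :=
  Nat.sInf_mem (s := {n | ArrowsClique n k r}) ⟨_, arrowsClique_pow k r⟩

namespace ArrowsClique

variable {R k r : ℕ}

theorem le (h : ArrowsClique R k r) (hr : 0 < r) : k ≤ R := by
  obtain ⟨-, t, ht, -⟩ := h fun _ => ⟨0, hr⟩
  simpa [ht] using t.card_le_univ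

theorem exists_subset (h : ArrowsClique R k r) {α : Type*} (S : Finset α) (hS : #S = R)
    (c : Sym2 α → Fin r) :
    ∃ i, ∃ t ⊆ S, #t = k ∧ ∀ x ∈ t, ∀ y ∈ t, x ≠ y → c s(x, y) = i := by
  let e : Fin R ↪ α := (S.equivFinOfCardEq hS).symm.toEmbedding.trans (.subtype _)
  obtain ⟨i, t, htk, hmono⟩ := h (c ∘ Sym2.map e)
  refine ⟨i, t.map e, fun x hx => ?_, by rw [card_map, htk], ?_⟩
  · obtain ⟨a, -, rfl⟩ := mem_map.mp hx
    exact ((S.equivFinOfCardEq hS).symm a).2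
  · simp only [mem_map]
    rintro _ ⟨a, ha, rfl⟩ _ ⟨b, hb, rfl⟩ hab
    simpa using hmono a ha b hb (ne_of_apply_ne e hab)

theorem exists_subset_of_ne_last (h : ArrowsClique R k r) (hr : 0 < r) {α : Type*}
    (S : Finset α) (hS : #S = R) (c : Sym2 α → Fin (r + 1))
    (hc : ∀ x ∈ S, ∀ y ∈ S, x ≠ y → c s(x, y) ≠ Fin.last r) :
    ∃ i : Fin (r + 1), (i : ℕ) < r ∧
      ∃ t ⊆ S, #t = k ∧ ∀ x ∈ t, ∀ y ∈ t, x ≠ y → c s(x, y) = i := by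
  let c' : Sym2 α → Fin r := fun e =>
    if he : c e = Fin.last r then ⟨0, hr⟩ else (c e).castPred he
  obtain ⟨i, t, htS, htk, hmono⟩ := h.exists_subset S hS c'
  refine ⟨i.castSucc, by simp, t, htS, htk, fun x hx y hy hxy => ?_⟩
  have hxy' := hmono x hx y hy hxy
  simp only [c', dif_neg (hc x (htS hx) y (htS hy) hxy)] at hxy'
  rw [← hxy', Fin.castSucc_castPred]

theorem choose_le (h : ArrowsClique R k r) (hr : 0 < r) (hR : 2 ≤ R) {α : Type*} [Fintype α]
    [DecidableEq α] (c : Sym2 α → Fin (r + 1)) :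
    (Fintype.card α).choose R ≤
      #{t ∈ univ.powersetCard k | ∃ i : Fin (r + 1), (i : ℕ) < r ∧
          ∀ x ∈ t, ∀ y ∈ t, x ≠ y → c s(x, y) = i} * (Fintype.card α - k).choose (R - k) +
        #{e ∈ (⊤ : SimpleGraph α).edgeFinset | c e = Fin.last r} *
          (Fintype.card α - 2).choose (R - 2) := by
  set M := {t ∈ (univ : Finset α).powersetCard k | ∃ i : Fin (r + 1), (i : ℕ) < r ∧
    ∀ x ∈ t, ∀ y ∈ t, x ≠ y → c s(x, y) = i}
  set E := {e ∈ (⊤ : SimpleGraph α).edgeFinset | c e = Fin.last r}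
  have hcover : (univ : Finset α).powersetCard R ⊆
      {S ∈ (univ : Finset α).powersetCard R | ∃ t ∈ M, t ⊆ S} ∪
        {S ∈ (univ : Finset α).powersetCard R | ∃ e ∈ E, e.toFinset ⊆ S} := by
    intro S hS
    have hSR := (mem_powersetCard.mp hS).2
    simp only [mem_union, mem_filter, hS, true_and]
    by_cases hlast : ∃ x ∈ S, ∃ y ∈ S, x ≠ y ∧ c s(x, y) = Fin.last r
    · obtain ⟨x, hx, y, hy, hxy, hcxy⟩ := hlast
      refine .inr ⟨s(x, y), mem_filter.mpr ⟨by simpa using hxy, hcxy⟩, ?_⟩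
      rw [Sym2.toFinset_mk_eq]
      exact insert_subset hx (singleton_subset_iff.mpr hy)
    · push Not at hlast
      obtain ⟨i, hir, t, htS, htk, hmono⟩ := h.exists_subset_of_ne_last hr S hSR c hlast
      exact .inl ⟨t, mem_filter.mpr ⟨mem_powersetCard.mpr ⟨subset_univ t, htk⟩, i, hir, hmono⟩,
        htS⟩
  have hM := card_filter_powersetCard_exists_subset_le univ M id (j := k) (R := R)
    (fun t ht => ⟨subset_univ t, (mem_powersetCard.mp (mem_filter.mp ht).1).2⟩)
    (h.le hr)
  have hE := card_filter_powersetCard_exists_subset_le univ E Sym2.toFinset (j := 2) (R := R)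
    (fun e he => ⟨subset_univ _, Sym2.card_toFinset_of_not_isDiag e
      (SimpleGraph.not_isDiag_of_mem_edgeSet _ (SimpleGraph.mem_edgeFinset.mp
        (mem_filter.mp he).1))⟩) hR
  rw [card_univ] at hM hE
  calc (Fintype.card α).choose R = #(univ.powersetCard R) := by
        rw [card_powersetCard, card_univ]
    _ ≤ _ := card_le_card hcover
    _ ≤ _ := card_union_le _ _
    _ ≤ _ := add_le_add hM hE

end ArrowsClique

end Ramsey

section Arithmetic

theorem Nat.cast_choose_eq_mul_choose_div {K : Type*} [Field K] [CharZero K] {n R j : ℕ}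
    (hjR : j ≤ R) : (n.choose R : K) = n.choose j * (n - j).choose (R - j) / R.choose j := by
  rw [eq_div_iff (Nat.cast_ne_zero.mpr (Nat.choose_pos hjR).ne')]
  exact_mod_cast Nat.choose_mul hjR

theorem Nat.two_mul_choose_two_lt_sq {R : ℕ} (hR : 0 < R) : 2 * R.choose 2 < R ^ 2 := by
  have := Nat.div_mul_le_self (R * (R - 1)) 2
  rw [Nat.choose_two_right]
  cases R with
  | zero => omega
  | succ R => simp only [Nat.add_sub_cancel] at this ⊢; nlinarith

theorem mul_choose_add_mul_choose_lt_choose {n k R : ℕ} {m e : ℝ} (hk : 2 ≤ k) (hkR : k ≤ R)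
    (hRn : R ≤ n) (hm : m ≤ (R.choose k : ℝ)⁻¹ / 2 * n.choose k)
    (he : e ≤ n.choose 2 / (R : ℝ) ^ 2) :
    m * (n - k).choose (R - k) + e * (n - 2).choose (R - 2) < n.choose R := by
  have hnR : (0 : ℝ) < n.choose R := by exact_mod_cast Nat.choose_pos hRn
  have hR : (0 : ℝ) < R := by exact_mod_cast (show 0 < R by omega)
  have hR2pos : (R.choose 2 : ℝ) ≠ 0 := by exact_mod_cast (Nat.choose_pos (by omega)).ne'
  have hR2 : (2 * R.choose 2 : ℝ) < R ^ 2 := by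
    exact_mod_cast Nat.two_mul_choose_two_lt_sq (by omega)
  have hcliques : m * (n - k).choose (R - k) ≤ n.choose R / 2 := by
    calc m * (n - k).choose (R - k)
        ≤ (R.choose k : ℝ)⁻¹ / 2 * n.choose k * (n - k).choose (R - k) := by gcongr
      _ = n.choose R / 2 := by rw [Nat.cast_choose_eq_mul_choose_div hkR]; ring
  have hedges : e * (n - 2).choose (R - 2) < n.choose R / 2 := by
    calc e * (n - 2).choose (R - 2)
        ≤ n.choose 2 / (R : ℝ) ^ 2 * (n - 2).choose (R - 2) := by gcongr
      _ = n.choose R * (2 * R.choose 2) / (2 * R ^ 2) := by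
          rw [Nat.cast_choose_eq_mul_choose_div (show 2 ≤ R by omega)]
          field_simp
      _ < n.choose R * R ^ 2 / (2 * R ^ 2) := by gcongr
      _ = n.choose R / 2 := by field_simp
  linarith

end Arithmetic

open Classical in
/-- Let `k ≥ 3`, `r ≥ 2`, `n ≥ R(k;r)` and `α = binom(R(k;r),k)⁻¹`.  For every coloring of the
edges of `K_n` with `r+1` colors, either more than `(α/2)·binom(n,k)` of the `k`-sets form a
monochromatic `K_k` whose color is among the first `r` colors, or more than
`binom(n,2)/R(k;r)²` edges receive color `r+1`. -/
theorem stmt4 (k r n : ℕ) (hk : 3 ≤ k) (hr : 2 ≤ r) (hn : ramseyNumber k r ≤ n) :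
    ∀ c : Sym2 (Fin n) → Fin (r + 1),
      (((ramseyNumber k r).choose k : ℝ)⁻¹ / 2 * (n.choose k : ℝ) <
        (((Finset.univ : Finset (Fin n)).powersetCard k).filter (fun t =>
          ∃ i : Fin (r + 1), (i : ℕ) < r ∧
            ∀ x ∈ t, ∀ y ∈ t, x ≠ y → c s(x, y) = i)).card)
      ∨ ((n.choose 2 : ℝ) / ((ramseyNumber k r : ℝ)) ^ 2 <
        (((⊤ : SimpleGraph (Fin n)).edgeFinset.filter (fun e => c e = Fin.last r)).card : ℝ)) := by
  intro c
  have hR := arrowsClique_ramseyNumber k r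
  have hkR := hR.le (by omega)
  have hcount := hR.choose_le (by omega) (by omega) c
  rw [Fintype.card_fin] at hcount
  by_contra! h
  exact (mul_choose_add_mul_choose_lt_choose (by omega) hkR hn h.1 h.2).not_ge
    (by exact_mod_cast hcount)
end

section
/- Fix an integer ℓ ≥ 2 and a real d ∈ (0,1). If n ≥ (2/d)^{ℓ-2} and 0 < ρ ≤ (d/2)^{ℓ-2}, then for every 2-coloring of the edges of any n-vertex (ρ,d)-dense graph Γ there exists a canonical sequence of vertices of length ℓ. -/
open Classical in
/-- The number of edges of `Γ` with both endpoints in `U`. -/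
noncomputable def edgesWithin {V : Type*} [Fintype V] (Γ : SimpleGraph V) (U : Finset V) : ℕ :=
  ((Finset.univ : Finset (Sym2 V)).filter (fun e => e ∈ Γ.edgeSet ∧ ∀ x ∈ e, x ∈ U)).card

/-- A graph `Γ` on `n` vertices is `(ρ,d)`-dense if every induced subgraph on `m ≥ ρn`
vertices contains at least `d·m²/2` edges. -/
def RhoDDense {V : Type*} [Fintype V] (Γ : SimpleGraph V) (ρ d : ℝ) : Prop :=
  ∀ U : Finset V, ρ * (Fintype.card V : ℝ) ≤ (U.card : ℝ) →
    d * (U.card : ℝ) ^ 2 / 2 ≤ (edgesWithin Γ U : ℝ)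

/-- A sequence `v_1, …, v_ℓ` of distinct, pairwise adjacent vertices of `Γ` is canonical for
the edge `2`-coloring `c` if for each `i` all "forward" edges `{v_i, v_j}`, `j > i`, have the
same color. -/
def Canonical {V : Type*} (Γ : SimpleGraph V) (c : Sym2 V → Fin 2) (ℓ : ℕ)
    (v : Fin ℓ → V) : Prop :=
  Function.Injective v ∧ (∀ i j, i ≠ j → Γ.Adj (v i) (v j)) ∧
    ∀ i j j' : Fin ℓ, i < j → i < j' → c s(v i, v j) = c s(v i, v j')

open Finset Classical in
lemma edgesWithin_double_count {V : Type*} [Fintype V] (Γ : SimpleGraph V) (U : Finset V) :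
    ∑ u ∈ U, (U.filter (Γ.Adj u)).card = 2 * edgesWithin Γ U := by
  classical
  let G : SimpleGraph {x // x ∈ U} := SimpleGraph.comap Subtype.val Γ
  have hdeg : ∀ a : {x // x ∈ U}, G.degree a = (U.filter (Γ.Adj ↑a)).card := by
    intro a
    have : U.filter (Γ.Adj ↑a)
        = (G.neighborFinset a).map ⟨Subtype.val, Subtype.val_injective⟩ := by
      ext w
      simp only [mem_filter, mem_map, SimpleGraph.mem_neighborFinset, Function.Embedding.coeFn_mk]
      constructor
      · rintro ⟨hw, ha⟩; exact ⟨⟨w, hw⟩, ha, rfl⟩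
      · rintro ⟨b, hb, rfl⟩; exact ⟨b.2, hb⟩
    rw [this, card_map, SimpleGraph.degree]
  have hedge : edgesWithin Γ U = G.edgeFinset.card := by
    have : (Finset.univ : Finset (Sym2 V)).filter (fun e => e ∈ Γ.edgeSet ∧ ∀ x ∈ e, x ∈ U)
        = G.edgeFinset.map ⟨Sym2.map Subtype.val, Sym2.map.injective Subtype.val_injective⟩ := by
      ext e
      simp only [mem_filter, mem_univ, true_and, mem_map, SimpleGraph.mem_edgeFinset,
        Function.Embedding.coeFn_mk]
      constructor
      · rintro ⟨he, hmem⟩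
        revert he hmem
        induction e using Sym2.ind with
        | _ x y =>
          intro he hmem
          refine ⟨s(⟨x, hmem x (by simp)⟩, ⟨y, hmem y (by simp)⟩), ?_, by simp⟩
          simpa [G] using he
      · rintro ⟨e', he', rfl⟩
        revert he'
        induction e' using Sym2.ind with
        | _ a b =>
          intro he'
          refine ⟨by simpa [G] using he', ?_⟩
          intro x hx
          rw [Sym2.map_pair_eq, Sym2.mem_iff] at hx
          rcases hx with rfl | rfl
          · exact a.2
          · exact b.2
    rw [edgesWithin]
    rw [Finset.filter_congr (fun x _ => Iff.rfl), this, card_map]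
  have hsum := SimpleGraph.sum_degrees_eq_twice_card_edges G
  calc ∑ u ∈ U, (U.filter (Γ.Adj u)).card
      = ∑ a : {x // x ∈ U}, (U.filter (Γ.Adj ↑a)).card := (Finset.sum_coe_sort U _).symm
    _ = ∑ a : {x // x ∈ U}, G.degree a := by simp [hdeg]
    _ = 2 * G.edgeFinset.card := hsum
    _ = 2 * edgesWithin Γ U := by rw [hedge]

open Finset Classical in
lemma step_lemma {V : Type*} [Fintype V] (Γ : SimpleGraph V) (c : Sym2 V → Fin 2)
    (d ρ : ℝ) (hd0 : 0 < d) (hΓ : RhoDDense Γ ρ d) (U : Finset V)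
    (hU : ρ * (Fintype.card V : ℝ) ≤ (U.card : ℝ)) (hU0 : 0 < U.card) :
    ∃ u ∈ U, ∃ U' : Finset V, U' ⊆ U ∧ u ∉ U' ∧ (∀ w ∈ U', Γ.Adj u w) ∧
      (∃ γ : Fin 2, ∀ w ∈ U', c s(u, w) = γ) ∧ d * (U.card : ℝ) / 2 ≤ (U'.card : ℝ) := by
  have hdense := hΓ U hU
  have hdc := edgesWithin_double_count Γ U
  -- find a vertex of degree ≥ d |U|
  have hexists : ∃ u ∈ U, d * (U.card : ℝ) ≤ ((U.filter (Γ.Adj u)).card : ℝ) := by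
    by_contra hcon
    push_neg at hcon
    have hlt : ∑ u ∈ U, ((U.filter (Γ.Adj u)).card : ℝ) < ∑ _u ∈ U, d * (U.card : ℝ) :=
      Finset.sum_lt_sum_of_nonempty (Finset.card_pos.mp hU0) (fun u hu => hcon u hu)
    have h1 : (∑ u ∈ U, ((U.filter (Γ.Adj u)).card : ℝ)) = 2 * (edgesWithin Γ U : ℝ) := by
      exact_mod_cast congrArg (Nat.cast : ℕ → ℝ) hdc
    have h2 : ∑ _u ∈ U, d * (U.card : ℝ) = d * (U.card : ℝ) ^ 2 := by
      rw [Finset.sum_const, nsmul_eq_mul]; ring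
    rw [h1, h2] at hlt
    nlinarith
  obtain ⟨u, hu, hdegu⟩ := hexists
  set N := U.filter (Γ.Adj u) with hN
  have hNsub : N ⊆ U := Finset.filter_subset _ _
  have huN : u ∉ N := by simp [hN]
  have hNadj : ∀ w ∈ N, Γ.Adj u w := fun w hw => (Finset.mem_filter.mp hw).2
  have hsplit : (N.filter (fun w => c s(u, w) = 0)).card
      + (N.filter (fun w => ¬ c s(u, w) = 0)).card = N.card :=
    Finset.card_filter_add_card_filter_not _
  have hone : ∀ a : Fin 2, ¬ a = 0 → a = 1 := by decide
  rcases le_or_gt N.card (2 * (N.filter (fun w => c s(u, w) = 0)).card) with hmaj | hmaj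
  · refine ⟨u, hu, N.filter (fun w => c s(u, w) = 0),
      (Finset.filter_subset _ _).trans hNsub,
      fun h => huN (Finset.filter_subset _ _ h),
      fun w hw => hNadj w (Finset.filter_subset _ _ hw),
      ⟨0, fun w hw => (Finset.mem_filter.mp hw).2⟩, ?_⟩
    have : (N.card : ℝ) ≤ 2 * ((N.filter (fun w => c s(u, w) = 0)).card : ℝ) := by
      exact_mod_cast hmaj
    linarith
  · refine ⟨u, hu, N.filter (fun w => ¬ c s(u, w) = 0),
      (Finset.filter_subset _ _).trans hNsub,
      fun h => huN (Finset.filter_subset _ _ h),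
      fun w hw => hNadj w (Finset.filter_subset _ _ hw),
      ⟨1, fun w hw => hone _ (Finset.mem_filter.mp hw).2⟩, ?_⟩
    have hcard : N.card ≤ 2 * (N.filter (fun w => ¬ c s(u, w) = 0)).card := by omega
    have : (N.card : ℝ) ≤ 2 * ((N.filter (fun w => ¬ c s(u, w) = 0)).card : ℝ) := by
      exact_mod_cast hcard
    linarith

/-- If `ℓ ≥ 2`, `d ∈ (0,1)`, `n ≥ (2/d)^(ℓ-2)` and `0 < ρ ≤ (d/2)^(ℓ-2)`, then for every
`2`-coloring of the edges of any `n`-vertex `(ρ,d)`-dense graph `Γ` there exists a canonical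
sequence of vertices of length `ℓ`. -/
theorem stmt5 (ℓ : ℕ) (hl : 2 ≤ ℓ) (d : ℝ) (hd0 : 0 < d) (hd1 : d < 1) (n : ℕ)
    (hn : (2 / d) ^ (ℓ - 2) ≤ (n : ℝ)) (ρ : ℝ) (hρ0 : 0 < ρ) (hρ : ρ ≤ (d / 2) ^ (ℓ - 2))
    (Γ : SimpleGraph (Fin n)) (hΓ : RhoDDense Γ ρ d) (c : Sym2 (Fin n) → Fin 2) :
    ∃ v : Fin ℓ → Fin n, Canonical Γ c ℓ v := by
  classical
  set k := ℓ - 2 with hkdef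
  have hℓ : ℓ = k + 2 := by omega
  have hd2pos : (0 : ℝ) < d / 2 := by linarith
  have hd2lt : d / 2 ≤ 1 := by linarith
  have h2d1 : (1 : ℝ) ≤ 2 / d := by
    rw [le_div_iff₀ hd0]; linarith
  have hn1 : (1 : ℝ) ≤ (n : ℝ) := by
    have := one_le_pow₀ h2d1 (n := k)
    linarith
  have hnpos : 0 < n := by exact_mod_cast lt_of_lt_of_le one_pos (by exact_mod_cast hn1)
  -- the main invariant, by induction
  have main : ∀ m, m ≤ k → ∃ (v : ℕ → Fin n) (U : Finset (Fin n)) (col : ℕ → Fin 2),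
      ((d / 2) ^ m * (n : ℝ) ≤ (U.card : ℝ)) ∧
      (∀ i < m, ∀ u ∈ U, Γ.Adj (v i) u) ∧
      (∀ i < m, v i ∉ U) ∧
      (∀ i j, i < j → j < m → Γ.Adj (v i) (v j)) ∧
      (∀ i < m, ∀ u ∈ U, c s(v i, u) = col i) ∧
      (∀ i j, i < j → j < m → c s(v i, v j) = col i) := by
    intro m
    induction m with
    | zero =>
      intro _
      refine ⟨fun _ => ⟨0, hnpos⟩, Finset.univ, fun _ => 0, ?_, ?_, ?_, ?_, ?_, ?_⟩ <;>
        simp [Finset.card_univ]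
    | succ m ih =>
      intro hmk
      obtain ⟨v, U, col, hcard, hadjU, hnotU, hadjvv, hcolU, hcolvv⟩ := ih (by omega)
      -- U is large enough to apply density
      have hUlarge : ρ * (Fintype.card (Fin n) : ℝ) ≤ (U.card : ℝ) := by
        have h1 : (d / 2) ^ k ≤ (d / 2) ^ m :=
          pow_le_pow_of_le_one (le_of_lt hd2pos) hd2lt (by omega)
        have : ρ * (n : ℝ) ≤ (d / 2) ^ m * (n : ℝ) := by
          apply mul_le_mul_of_nonneg_right (le_trans hρ h1) (by positivity)
        simpa [Fintype.card_fin] using le_trans this hcard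
      have hU0 : 0 < U.card := by
        have h1 : (0:ℝ) < (d / 2) ^ m * (n : ℝ) := by positivity
        have : (0 : ℝ) < (U.card : ℝ) := by linarith
        exact_mod_cast this
      obtain ⟨u, hu, U', hsub, hunotU', hadju, ⟨γ, hγ⟩, hcardU'⟩ :=
        step_lemma Γ c d ρ hd0 hΓ U hUlarge hU0
      refine ⟨Function.update v m u, U', Function.update col m γ, ?_, ?_, ?_, ?_, ?_, ?_⟩
      · have h3 : (d / 2) ^ (m + 1) * (n : ℝ) ≤ (d / 2) * (U.card : ℝ) := by
          have h4 := mul_le_mul_of_nonneg_left hcard (le_of_lt hd2pos)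
          calc (d / 2) ^ (m + 1) * (n : ℝ) = (d / 2) * ((d / 2) ^ m * n) := by ring
            _ ≤ (d / 2) * (U.card : ℝ) := h4
        have h2 : (d / 2) * (U.card : ℝ) = d * (U.card : ℝ) / 2 := by ring
        linarith [hcardU']
      · intro i hi w hw
        rcases Nat.lt_succ_iff_lt_or_eq.mp hi with hi | rfl
        · rw [Function.update_of_ne (Nat.ne_of_lt hi)]
          exact hadjU i hi w (hsub hw)
        · rw [Function.update_self]; exact hadju w hw
      · intro i hi
        rcases Nat.lt_succ_iff_lt_or_eq.mp hi with hi | rfl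
        · rw [Function.update_of_ne (Nat.ne_of_lt hi)]
          exact fun h => hnotU i hi (hsub h)
        · rw [Function.update_self]; exact hunotU'
      · intro i j hij hj
        rcases Nat.lt_succ_iff_lt_or_eq.mp hj with hj | rfl
        · rw [Function.update_of_ne (Nat.ne_of_lt (lt_trans hij hj)),
            Function.update_of_ne (Nat.ne_of_lt hj)]
          exact hadjvv i j hij hj
        · rw [Function.update_of_ne (Nat.ne_of_lt hij), Function.update_self]
          exact (hadjU i hij u hu)
      · intro i hi w hw
        rcases Nat.lt_succ_iff_lt_or_eq.mp hi with hi | rfl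
        · rw [Function.update_of_ne (Nat.ne_of_lt hi), Function.update_of_ne (Nat.ne_of_lt hi)]
          exact hcolU i hi w (hsub hw)
        · rw [Function.update_self, Function.update_self]; exact hγ w hw
      · intro i j hij hj
        rcases Nat.lt_succ_iff_lt_or_eq.mp hj with hj | rfl
        · rw [Function.update_of_ne (Nat.ne_of_lt (lt_trans hij hj)),
            Function.update_of_ne (Nat.ne_of_lt hj),
            Function.update_of_ne (Nat.ne_of_lt (lt_trans hij hj))]
          exact hcolvv i j hij hj
        · rw [Function.update_of_ne (Nat.ne_of_lt hij), Function.update_self,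
            Function.update_of_ne (Nat.ne_of_lt hij)]
          exact hcolU i hij u hu
  -- extract final data
  obtain ⟨v, U, col, hcard, hadjU, hnotU, hadjvv, hcolU, hcolvv⟩ := main k le_rfl
  -- U has at least one edge inside
  have hUlarge : ρ * (Fintype.card (Fin n) : ℝ) ≤ (U.card : ℝ) := by
    have : ρ * (n : ℝ) ≤ (d / 2) ^ k * (n : ℝ) :=
      mul_le_mul_of_nonneg_right hρ (by positivity)
    simpa [Fintype.card_fin] using le_trans this hcard
  have hU1 : (1 : ℝ) ≤ (U.card : ℝ) := by
    have h1 : (d / 2) ^ k * (2 / d) ^ k ≤ (d / 2) ^ k * (n : ℝ) :=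
      mul_le_mul_of_nonneg_left hn (by positivity)
    have h2 : (d / 2) ^ k * (2 / d) ^ k = 1 := by
      rw [← mul_pow]
      have : d / 2 * (2 / d) = 1 := by field_simp
      rw [this, one_pow]
    linarith
  have hdense := hΓ U hUlarge
  have hpos : 0 < edgesWithin Γ U := by
    have hsq : (1 : ℝ) ≤ (U.card : ℝ) ^ 2 := by nlinarith
    have : (0 : ℝ) < (edgesWithin Γ U : ℝ) := by nlinarith
    exact_mod_cast this
  have key : ∀ (s : Finset (Sym2 (Fin n))) (p : Sym2 (Fin n) → Prop)
      (inst : DecidablePred p), 0 < (@Finset.filter _ p inst s).card → ∃ e ∈ s, p e := by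
    intro s p inst h
    obtain ⟨e, he⟩ := Finset.card_pos.mp h
    exact ⟨e, (Finset.mem_filter.mp he).1, (Finset.mem_filter.mp he).2⟩
  unfold edgesWithin at hpos
  obtain ⟨e, -, heE, heU⟩ := key _ _ _ hpos
  revert heE heU
  induction e using Sym2.ind with
  | _ x y =>
  intro heE heU
  have hxy : Γ.Adj x y := heE
  have hxU : x ∈ U := heU x (Sym2.mem_mk_left x y)
  have hyU : y ∈ U := heU y (Sym2.mem_mk_right x y)
  -- the final sequence
  set w : ℕ → Fin n := fun i => if i < k then v i else if i = k then x else y with hw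
  have hwlt : ∀ i, i < k → w i = v i := fun i h => by simp [hw, h]
  have hwk : w k = x := by simp [hw]
  have hwk1 : w (k + 1) = y := by simp [hw]
  have hwU : ∀ j, k ≤ j → j < ℓ → w j ∈ U := by
    intro j h1 h2
    have : j = k ∨ j = k + 1 := by omega
    rcases this with rfl | rfl
    · rw [hwk]; exact hxU
    · rw [hwk1]; exact hyU
  have adj : ∀ i j : ℕ, i < j → j < ℓ → Γ.Adj (w i) (w j) := by
    intro i j hij hj
    rcases lt_or_ge j k with hjk | hjk
    · rw [hwlt i (by omega), hwlt j hjk]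
      exact hadjvv i j hij hjk
    · rcases lt_or_ge i k with hik | hik
      · rw [hwlt i hik]
        exact hadjU i hik _ (hwU j hjk hj)
      · have h1 : i = k := by omega
        have h2 : j = k + 1 := by omega
        subst h1; subst h2
        rw [hwk, hwk1]; exact hxy
  refine ⟨fun i => w i, ?_, ?_, ?_⟩
  · intro a b hab
    have hab' : w (a : ℕ) = w (b : ℕ) := hab
    by_contra hne
    have hne' : (a : ℕ) ≠ (b : ℕ) := fun h => hne (Fin.ext h)
    rcases hne'.lt_or_gt with h | h
    · have h2 := adj a b h b.isLt
      rw [hab'] at h2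
      exact Γ.irrefl h2
    · have h2 := adj b a h a.isLt
      rw [hab'] at h2
      exact Γ.irrefl h2
  · intro i j hij
    have hne' : (i : ℕ) ≠ (j : ℕ) := fun h => hij (Fin.ext h)
    rcases hne'.lt_or_gt with h | h
    · exact adj i j h j.isLt
    · exact (adj j i h i.isLt).symm
  · intro i j j' hij hij'
    show c s(w (i : ℕ), w (j : ℕ)) = c s(w (i : ℕ), w (j' : ℕ))
    rcases lt_or_ge (i : ℕ) k with hik | hik
    · have hcol : ∀ m : Fin ℓ, (i : ℕ) < (m : ℕ) → c s(w i, w m) = col i := by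
        intro m hm
        rw [hwlt i hik]
        rcases lt_or_ge (m : ℕ) k with hmk | hmk
        · rw [hwlt m hmk]
          exact hcolvv i m hm hmk
        · exact hcolU i hik _ (hwU m hmk m.isLt)
      rw [hcol j hij, hcol j' hij']
    · have h1 : (j : ℕ) = k + 1 := by
        have := j.isLt; have := hij; omega
      have h2 : (j' : ℕ) = k + 1 := by
        have := j'.isLt; have := hij'; omega
      have : j = j' := Fin.ext (h1.trans h2.symm)
      rw [this]
end

section
/- For every integer k ≥ 2 and every d ∈ (0,1): if n ≥ (2/d)^{2k-4} and 0 < ρ ≤ (d/2)^{2k-4}, then every 2-coloring of the edges of an n-vertex (ρ,d)-dense graph Γ contains a monochromatic copy of K_k. -/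
/-!
Build a canonical sequence greedily. While `|U| ≥ ρn`, density gives a vertex `x ∈ U` with at
least `d|U|` neighbours in `U`, and one colour is used on at least half of these edges; append `x`
and pass to that monochromatic neighbourhood, of size at least `(d/2)|U|`. Since
`ρ ≤ (d/2)^(2k-4)`, starting from `U = V` this can be done `2k-3` times and still leaves a vertex,
so there is a canonical sequence of length `2k-2`. By pigeonhole, `k-1` of its first `2k-3`
vertices share their forward colour; with the last vertex they span a monochromatic `K_k`.
-/

open Finset

variable {V : Type*} {Γ : SimpleGraph V}

namespace Canonical

variable {c : Sym2 V → Fin 2}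

lemma one (Γ : SimpleGraph V) (c : Sym2 V → Fin 2) (x : V) : Canonical Γ c 1 fun _ => x :=
  ⟨fun _ _ _ => Subsingleton.elim _ _, fun i j h => (h (Subsingleton.elim i j)).elim,
    fun i j _ hij _ => (hij.ne (Subsingleton.elim i j)).elim⟩

lemma cons {ℓ : ℕ} {v : Fin ℓ → V} (hv : Canonical Γ c ℓ v) {x : V} {i : Fin 2}
    (hx : ∀ j, Γ.Adj x (v j) ∧ c s(x, v j) = i) : Canonical Γ c (ℓ + 1) (Fin.cons x v) := by
  refine ⟨Fin.cons_injective_iff.2 ⟨?_, hv.1⟩, ?_, ?_⟩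
  · rintro ⟨j, hj⟩
    exact (hx j).1.ne hj.symm
  · intro a b hab
    cases a using Fin.cases <;> cases b using Fin.cases
    · exact (hab rfl).elim
    · exact (hx _).1
    · exact (hx _).1.symm
    · exact hv.2.1 _ _ (by simpa using hab)
  · intro a b b' hab hab'
    cases b using Fin.cases with
    | zero => exact absurd hab (Fin.not_lt_zero a)
    | succ b =>
    cases b' using Fin.cases with
    | zero => exact absurd hab' (Fin.not_lt_zero a)
    | succ b' =>
    cases a using Fin.cases with
    | zero => simp only [Fin.cons_zero, Fin.cons_succ, (hx _).2]
    | succ a => exact hv.2.2 a b b' (Fin.succ_lt_succ_iff.1 hab) (Fin.succ_lt_succ_iff.1 hab')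

lemma exists_monochromatic_isNClique {ℓ k : ℕ} {v : Fin (ℓ + 1) → V}
    (hv : Canonical Γ c (ℓ + 1) v) (hk : 2 * (k - 2) < ℓ) :
    ∃ i : Fin 2, ∃ t : Finset V, Γ.IsNClique k t ∧
      (t : Set V).Pairwise fun x y => c s(x, y) = i := by
  set last := Fin.last ℓ
  -- the forward colour of `v j`, for `j ≠ last`, is that of its edge to `v last`
  obtain ⟨i, -, hi⟩ := exists_lt_card_fiber_of_mul_lt_card_of_maps_to
    (s := univ.erase last) (t := univ) (f := fun j => c s(v j, v last)) (n := k - 2)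
    (fun _ _ => mem_univ _) (by simpa using hk)
  set T := insert last {j ∈ univ.erase last | c s(v j, v last) = i}
  have hT : k ≤ #T := by
    rw [card_insert_of_notMem (by simp)]
    omega
  have hforward : ∀ a ∈ T, ∀ b ∈ T, a < b → c s(v a, v b) = i := by
    intro a ha b _ hab
    have ha' : a ≠ last := (hab.trans_le (Fin.le_last b)).ne
    simp only [T, mem_insert, ha', false_or, mem_filter] at ha
    rw [hv.2.2 a b last hab (hab.trans_le (Fin.le_last b)), ha.2]
  have hcol : (T : Set (Fin (ℓ + 1))).Pairwise fun a b => c s(v a, v b) = i := by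
    intro a ha b hb hab
    rcases hab.lt_or_gt with h | h
    · exact hforward a ha b hb h
    · rw [Sym2.eq_swap]
      exact hforward b hb a ha h
  obtain ⟨t, hsub, rfl⟩ := exists_subset_card_eq (s := T.map ⟨v, hv.1⟩) (by simpa using hT)
  have hsub' : (t : Set V) ⊆ v '' T := by
    rwa [← coe_subset, coe_map] at hsub
  refine ⟨i, t, ⟨?_, rfl⟩, (hv.1.injOn.pairwise_image.2 hcol).mono hsub'⟩
  · refine Set.Pairwise.mono hsub' ?_
    rintro _ ⟨a, -, rfl⟩ _ ⟨b, -, rfl⟩ hab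
    exact hv.2.1 a b (ne_of_apply_ne v hab)

end Canonical

variable [Fintype V]

lemma sum_card_adj_eq_two_mul_edgesWithin (Γ : SimpleGraph V) [DecidableRel Γ.Adj]
    (U : Finset V) : ∑ v ∈ U, #{w ∈ U | Γ.Adj v w} = 2 * edgesWithin Γ U := by
  classical
  let G := ((⊤ : Γ.Subgraph).induce (U : Set V)).spanningCoe
  have hadj : ∀ v w, G.Adj v w ↔ v ∈ U ∧ w ∈ U ∧ Γ.Adj v w := by
    simp [G]
  have hdeg : ∀ v, G.degree v = if v ∈ U then #{w ∈ U | Γ.Adj v w} else 0 := by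
    intro v
    rw [← SimpleGraph.card_neighborFinset_eq_degree]
    split_ifs with hv
    · congr 1
      ext w
      simp [hadj, hv]
    · rw [card_eq_zero, eq_empty_iff_forall_notMem]
      simp [hadj, hv]
  have hedges : #G.edgeFinset = edgesWithin Γ U := by
    rw [edgesWithin]
    congr 1
    ext e
    induction e using Sym2.ind with
    | _ a b =>
      simp only [SimpleGraph.mem_edgeFinset, SimpleGraph.mem_edgeSet, hadj, mem_filter, mem_univ,
        true_and, Sym2.mem_iff, forall_eq_or_imp, forall_eq]
      tauto
  rw [← hedges, ← G.sum_degrees_eq_twice_card_edges, ← sum_filter_add_sum_filter_not univ (· ∈ U)]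
  simp [hdeg]

namespace RhoDDense

variable {ρ d : ℝ} {U : Finset V}

lemma exists_le_card_adj [DecidableRel Γ.Adj] (hΓ : RhoDDense Γ ρ d)
    (hU : ρ * Fintype.card V ≤ #U) (hne : U.Nonempty) :
    ∃ v ∈ U, d * #U ≤ #{w ∈ U | Γ.Adj v w} := by
  by_contra! hlt
  have hsum : ((2 * edgesWithin Γ U : ℕ) : ℝ) < ∑ _v ∈ U, d * #U := by
    rw [← sum_card_adj_eq_two_mul_edgesWithin]
    push_cast
    exact sum_lt_sum_of_nonempty hne hlt
  rw [sum_const, nsmul_eq_mul] at hsum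
  push_cast at hsum
  nlinarith [hΓ U hU]

lemma exists_monochromatic_neighbors (hΓ : RhoDDense Γ ρ d) (c : Sym2 V → Fin 2)
    (hρ : 0 < ρ * Fintype.card V) (hU : ρ * Fintype.card V ≤ #U) :
    ∃ x ∈ U, ∃ i : Fin 2, ∃ U' ⊆ U, d * #U ≤ 2 * #U' ∧
      ∀ w ∈ U', Γ.Adj x w ∧ c s(x, w) = i := by
  classical
  obtain ⟨x, hx, hdeg⟩ :=
    hΓ.exists_le_card_adj hU (card_pos.1 (by exact_mod_cast hρ.trans_le hU))
  obtain ⟨i, -, hi⟩ := exists_le_card_fiber_of_nsmul_le_card_of_maps_to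
    (s := {w ∈ U | Γ.Adj x w}) (t := univ) (f := fun w => c s(x, w)) (b := d * #U / 2)
    (fun _ _ => mem_univ _) univ_nonempty
    (by simp only [card_univ, Fintype.card_fin, nsmul_eq_mul, Nat.cast_ofNat]; linarith)
  refine ⟨x, hx, i, _, (filter_subset _ _).trans (filter_subset _ _), by linarith, ?_⟩
  intro w hw
  simp only [mem_filter] at hw
  exact ⟨hw.1.2, hw.2⟩

lemma exists_canonical (hΓ : RhoDDense Γ ρ d) (hd0 : 0 < d) (hd1 : d < 1)
    (hρ : 0 < ρ * Fintype.card V) (c : Sym2 V → Fin 2) (j : ℕ) (U : Finset V)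
    (hU : ρ * Fintype.card V ≤ (d / 2) ^ j * #U) :
    ∃ v : Fin (j + 2) → V, Canonical Γ c (j + 2) v ∧ ∀ i, v i ∈ U := by
  induction j generalizing U with
  | zero =>
    rw [pow_zero, one_mul] at hU
    obtain ⟨x, hx, i, U', hU'U, hU', hxU'⟩ := hΓ.exists_monochromatic_neighbors c hρ hU
    obtain ⟨y, hy⟩ : U'.Nonempty :=
      card_pos.1 (by exact_mod_cast (by nlinarith : (0 : ℝ) < #U'))
    exact ⟨Fin.cons x fun _ => y, (Canonical.one Γ c y).cons fun _ => hxU' y hy,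
      Fin.forall_fin_succ.2 ⟨hx, fun _ => hU'U hy⟩⟩
  | succ j ih =>
    obtain ⟨x, hx, i, U', hU'U, hU', hxU'⟩ := hΓ.exists_monochromatic_neighbors c hρ
      (hU.trans (mul_le_of_le_one_left (by positivity) (pow_le_one₀ (by positivity) (by linarith))))
    obtain ⟨v, hv, hvU'⟩ := ih U' <| calc
      ρ * Fintype.card V ≤ (d / 2) ^ (j + 1) * #U := hU
      _ = (d / 2) ^ j * (d * #U / 2) := by ring
      _ ≤ (d / 2) ^ j * #U' := by gcongr; linarith
    exact ⟨Fin.cons x v, hv.cons fun j => hxU' _ (hvU' j),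
      Fin.forall_fin_succ.2 ⟨hx, fun j => hU'U (hvU' j)⟩⟩

end RhoDDense

theorem stmt7_general (k : ℕ) (d : ℝ) (hd0 : 0 < d) (hd1 : d < 1) (n : ℕ)
    (hn : (2 / d) ^ (2 * k - 4) ≤ (n : ℝ)) (ρ : ℝ) (hρ0 : 0 < ρ)
    (hρ : ρ ≤ (d / 2) ^ (2 * k - 4)) (Γ : SimpleGraph (Fin n)) (hΓ : RhoDDense Γ ρ d)
    (c : Sym2 (Fin n) → Fin 2) :
    ∃ i : Fin 2, ∃ t : Finset (Fin n), t.card = k ∧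
      (∀ x ∈ t, ∀ y ∈ t, x ≠ y → Γ.Adj x y) ∧
      ∀ x ∈ t, ∀ y ∈ t, x ≠ y → c s(x, y) = i := by
  have hn0 : (0 : ℝ) < n := lt_of_lt_of_le (by positivity) hn
  obtain ⟨v, hv, -⟩ := hΓ.exists_canonical hd0 hd1 (by simpa using mul_pos hρ0 hn0) c
    (2 * k - 4) univ (by simpa using mul_le_mul_of_nonneg_right hρ hn0.le)
  obtain ⟨i, t, ht, hc⟩ := hv.exists_monochromatic_isNClique (k := k) (by omega)
  exact ⟨i, t, ht.card_eq, fun x hx y hy => ht.isClique hx hy, fun x hx y hy => hc hx hy⟩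

/-- For every integer `k ≥ 2` and every `d ∈ (0,1)`: if `n ≥ (2/d)^(2k-4)` and
`0 < ρ ≤ (d/2)^(2k-4)`, then every `2`-coloring of the edges of an `n`-vertex `(ρ,d)`-dense
graph `Γ` contains a monochromatic copy of `K_k`. -/
theorem stmt7 (k : ℕ) (hk : 2 ≤ k) (d : ℝ) (hd0 : 0 < d) (hd1 : d < 1) (n : ℕ)
    (hn : (2 / d) ^ (2 * k - 4) ≤ (n : ℝ)) (ρ : ℝ) (hρ0 : 0 < ρ)
    (hρ : ρ ≤ (d / 2) ^ (2 * k - 4)) (Γ : SimpleGraph (Fin n)) (hΓ : RhoDDense Γ ρ d)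
    (c : Sym2 (Fin n) → Fin 2) :
    ∃ i : Fin 2, ∃ t : Finset (Fin n), t.card = k ∧
      (∀ x ∈ t, ∀ y ∈ t, x ≠ y → Γ.Adj x y) ∧
      ∀ x ∈ t, ∀ y ∈ t, x ≠ y → c s(x, y) = i :=
  stmt7_general k d hd0 hd1 n hn ρ hρ0 hρ Γ hΓ c
end
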